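/- For every integer n ≥ 0, the elements y(xy)ⁿ and x(yx)ⁿ of the algebra H are linearly independent over k. -/
import Mathlib


open FreeAlgebra

noncomputable section

/-- The defining relations `x²y + yx² = 2y³` and `xy² + y²x = 2x³` of the algebra `H`
(with `x = ι k 0`, `y = ι k 1`). -/
inductive HRel (k : Type*) [CommRing k] :
    FreeAlgebra k (Fin 2) → FreeAlgebra k (Fin 2) → Prop
  | rel1 : HRel k (ι k 0 * ι k 0 * ι k 1 + ι k 1 * ι k 0 * ι k 0)
      ((2 : k) • (ι k 1 * ι k 1 * ι k 1))
  | rel2 : HRel k (ι k 0 * ι k 1 * ι k 1 + ι k 1 * ι k 1 * ι k 0)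
      ((2 : k) • (ι k 0 * ι k 0 * ι k 0))

/-- The algebra `H = k⟨x,y⟩/(x²y + yx² − 2y³, −2x³ + xy² + y²x)`. -/
abbrev HAlg (k : Type*) [CommRing k] : Type _ := RingQuot (HRel k)

/-- The generator `x` of `H`. -/
def HAlg.x (k : Type*) [CommRing k] : HAlg k :=
  RingQuot.mkAlgHom k (HRel k) (ι k 0)

/-- The generator `y` of `H`. -/
def HAlg.y (k : Type*) [CommRing k] : HAlg k :=
  RingQuot.mkAlgHom k (HRel k) (ι k 1)

namespace HAux

variable (k : Type*) [Field k]

/-- Matrix model of `x`: an involution. -/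
def X : Matrix (Fin 2) (Fin 2) k := !![1, 0; 0, -1]

/-- Matrix model of `y`: another involution. -/
def Y : Matrix (Fin 2) (Fin 2) k := !![0, 1; 1, 0]

lemma XX : X k * X k = 1 := by
  simp [X, Matrix.mul_fin_two, Matrix.one_fin_two]

lemma YY : Y k * Y k = 1 := by
  simp [Y, Matrix.mul_fin_two, Matrix.one_fin_two]

lemma JJ : (X k * Y k) * (X k * Y k) = -1 := by
  simp [X, Y, Matrix.mul_fin_two, Matrix.one_fin_two]

lemma KK : (Y k * X k) * (Y k * X k) = -1 := by
  simp [X, Y, Matrix.mul_fin_two, Matrix.one_fin_two]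

/-- The representation `H → M₂(k)`, `x ↦ X`, `y ↦ Y`. -/
def φ : HAlg k →ₐ[k] Matrix (Fin 2) (Fin 2) k :=
  RingQuot.liftAlgHom k ⟨FreeAlgebra.lift k ![X k, Y k], by
    intro a b h
    induction h with
    | rel1 =>
        simp only [map_add, map_mul, map_smul, FreeAlgebra.lift_ι_apply,
          Matrix.cons_val_zero, Matrix.cons_val_one, Matrix.head_cons]
        rw [XX, one_mul, mul_assoc, XX, mul_one, YY, one_mul, two_smul]
    | rel2 =>
        simp only [map_add, map_mul, map_smul, FreeAlgebra.lift_ι_apply,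
          Matrix.cons_val_zero, Matrix.cons_val_one, Matrix.head_cons]
        rw [mul_assoc, YY, mul_one, one_mul, XX, one_mul, two_smul]⟩

lemma φx : φ k (HAlg.x k) = X k := by
  simp [φ, HAlg.x, RingQuot.liftAlgHom_mkAlgHom_apply]

lemma φy : φ k (HAlg.y k) = Y k := by
  simp [φ, HAlg.y, RingQuot.liftAlgHom_mkAlgHom_apply]

lemma key : ∀ (m : ℕ) (s t : k),
    s • (Y k * (X k * Y k) ^ m) + t • (X k * (Y k * X k) ^ m) = 0 → s = 0 ∧ t = 0 := by
  intro m
  induction m using Nat.twoStepInduction with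
  | zero =>
      intro s t h
      simp only [pow_zero, mul_one] at h
      have h00 := congrFun (congrFun h 0) 0
      have h01 := congrFun (congrFun h 0) 1
      simp [X, Y, Matrix.add_apply, Matrix.smul_apply] at h00 h01
      exact ⟨h01, h00⟩
  | one =>
      intro s t h
      simp only [pow_one] at h
      rw [show Y k * (X k * Y k) = !![(-1 : k), 0; 0, 1] by
            simp [X, Y, Matrix.mul_fin_two],
          show X k * (Y k * X k) = !![(0 : k), -1; -1, 0] by
            simp [X, Y, Matrix.mul_fin_two]] at h
      have h00 := congrFun (congrFun h 0) 0
      have h01 := congrFun (congrFun h 0) 1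
      simp [Matrix.add_apply, Matrix.smul_apply] at h00 h01
      exact ⟨h00, h01⟩
  | more m ih _ =>
      intro s t h
      apply ih
      rw [pow_add, sq, JJ, mul_neg_one, mul_neg, pow_add, sq, KK, mul_neg_one, mul_neg,
        smul_neg, smul_neg, ← neg_add, neg_eq_zero] at h
      exact h

end HAux

/-- for every `n ≥ 0`, the elements `y(xy)ⁿ` and `x(yx)ⁿ` of `H` are
linearly independent over `k`. -/
theorem HAlg_yxy_xyx_linearIndependent (k : Type*) [Field k] [IsAlgClosed k] [CharZero k]
    (n : ℕ) :
    LinearIndependent k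
      ![HAlg.y k * (HAlg.x k * HAlg.y k) ^ n, HAlg.x k * (HAlg.y k * HAlg.x k) ^ n] := by
  rw [LinearIndependent.pair_iff]
  intro s t hst
  have h := congrArg (HAux.φ k) hst
  simp only [map_add, map_smul, map_mul, map_pow, map_zero, HAux.φx, HAux.φy] at h
  exact HAux.key k n s t h

end
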